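/- arXiv:1409.8220 — 3 statements merged into one kernel-verified Lean document; each statement's English description precedes it below -/
import Mathlib

section
/- For any linear code C ⊆ F_q^n and integer t ≥ 2, the t-closure of C equals the dual of the Schur product of C^(t-1) with the dual of C^(t), i.e. \overline{C}^t = (C^(t-1) * (C^(t))^⊥)^⊥. -/
open Finset

variable {F : Type*} [Field F] {n : ℕ}

/-- Schur (componentwise) product of two linear codes: the span of componentwise products. -/
def schurMul (A B : Submodule F (Fin n → F)) : Submodule F (Fin n → F) :=
  Submodule.span F {x | ∃ a ∈ A, ∃ b ∈ B, x = a * b}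

/-- `schurPow C t` is the `t`-fold Schur power `C^(t)` (with `C^(0)` conventionally `C`). -/
def schurPow (C : Submodule F (Fin n → F)) : ℕ → Submodule F (Fin n → F)
  | 0 => C
  | 1 => C
  | (t + 2) => schurMul C (schurPow C (t + 1))

/-- Dual code with respect to the standard bilinear form `⟨x, y⟩ = ∑ i, x i * y i`. -/
def dualCode (C : Submodule F (Fin n → F)) : Submodule F (Fin n → F) where
  carrier := {x | ∀ c ∈ C, ∑ i, x i * c i = 0}
  zero_mem' := fun c _ => by simp
  add_mem' := fun {a b} ha hb c hc => by
    have h : ∑ i, ((a + b) i * c i) = (∑ i, a i * c i) + ∑ i, b i * c i := by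
      simp [add_mul, Finset.sum_add_distrib]
    show ∑ i, (a + b) i * c i = 0
    rw [h, ha c hc, hb c hc, add_zero]
  smul_mem' := fun r a ha c hc => by
    have h : ∑ i, ((r • a) i * c i) = r * ∑ i, a i * c i := by
      simp [Finset.mul_sum, mul_assoc]
    show ∑ i, (r • a) i * c i = 0
    rw [h, ha c hc, mul_zero]

/-- The `t`-closure of a code `C`: all vectors `a` with `a * C^(t-1) ⊆ C^(t)`. -/
def closureSet (C : Submodule F (Fin n → F)) (t : ℕ) : Set (Fin n → F) :=
  {a | ∀ c ∈ schurPow C (t - 1), a * c ∈ schurPow C t}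

/-- Generalized Reed–Solomon code `GRS_k(a, b)`. -/
def GRS (k : ℕ) (a b : Fin n → F) : Submodule F (Fin n → F) :=
  Submodule.span F
    {x | ∃ f : Polynomial F, f.degree < (k : WithBot ℕ) ∧ x = fun i => b i * f.eval (a i)}

/-- Vectors vanishing on an index set `I`. -/
def zeroOn (I : Set (Fin n)) : Submodule F (Fin n → F) where
  carrier := {c | ∀ i ∈ I, c i = 0}
  zero_mem' := fun i _ => rfl
  add_mem' := fun {a b} ha hb i hi => by simp [ha i hi, hb i hi]
  smul_mem' := fun r a ha i hi => by simp [ha i hi]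

/-- standard bilinear form -/
noncomputable def stdB : LinearMap.BilinForm F (Fin n → F) :=
  LinearMap.mk₂ F (fun x y => ∑ i, x i * y i)
    (fun a b c => by simp [add_mul, Finset.sum_add_distrib])
    (fun r a b => by simp [Finset.mul_sum, mul_assoc])
    (fun a b c => by simp [mul_add, Finset.sum_add_distrib])
    (fun r a b => by
      simp only [Pi.smul_apply, smul_eq_mul, Finset.mul_sum]
      exact Finset.sum_congr rfl fun i _ => by ring)

lemma stdB_refl : (stdB (F := F) (n := n)).IsRefl := fun x y h => by
  simpa [stdB, mul_comm] using h

lemma stdB_nondeg : (stdB (F := F) (n := n)).Nondegenerate := by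
  refine (LinearMap.IsRefl.nondegenerate_iff_separatingLeft (B := stdB (F := F) (n := n)) stdB_refl).2 ?_
  intro x hx
  funext i
  have := hx (Pi.single i 1)
  simpa [stdB, Finset.sum_eq_single i, Pi.single_apply] using this

lemma dualCode_eq_orth (C : Submodule F (Fin n → F)) :
    dualCode C = stdB.orthogonal C := by
  ext x
  constructor
  · intro hx c hc
    have := hx c hc
    simpa [stdB, LinearMap.BilinForm.IsOrtho, mul_comm] using this
  · intro hx c hc
    have := hx c hc
    simpa [stdB, LinearMap.BilinForm.IsOrtho, mul_comm] using this

lemma dual_dual (C : Submodule F (Fin n → F)) : dualCode (dualCode C) = C := by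
  rw [dualCode_eq_orth, dualCode_eq_orth]
  exact LinearMap.BilinForm.orthogonal_orthogonal stdB_nondeg stdB_refl C


theorem t_closure_eq_dual_of_schur (C : Submodule F (Fin n → F)) (t : ℕ) (ht : 2 ≤ t) :
    closureSet C t =
      ↑(dualCode (schurMul (schurPow C (t - 1)) (dualCode (schurPow C t)))) := by
  ext a
  constructor
  · intro ha x hx
    induction hx using Submodule.span_induction with
    | mem x hxm =>
      obtain ⟨c, hc, d, hd, rfl⟩ := hxm
      have h1 : a * c ∈ schurPow C t := ha c hc
      have := hd (a * c) h1
      calc ∑ i, a i * (c * d) i = ∑ i, d i * (a * c) i := by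
            apply Finset.sum_congr rfl; intro i _; simp [Pi.mul_apply]; ring
        _ = 0 := this
    | zero => simp
    | add x y _ _ hx hy =>
      have : ∑ i, a i * (x + y) i = (∑ i, a i * x i) + ∑ i, a i * y i := by
        simp [mul_add, Finset.sum_add_distrib]
      rw [this, hx, hy, add_zero]
    | smul r x _ hx =>
      have : ∑ i, a i * (r • x) i = r * ∑ i, a i * x i := by
        simp only [Pi.smul_apply, smul_eq_mul, Finset.mul_sum]
        exact Finset.sum_congr rfl fun i _ => by ring
      rw [this, hx, mul_zero]
  · intro ha c hc
    rw [← dual_dual (schurPow C t)]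
    intro d hd
    have hcd : c * d ∈ schurMul (schurPow C (t - 1)) (dualCode (schurPow C t)) :=
      Submodule.subset_span ⟨c, hc, d, hd, rfl⟩
    have := ha (c * d) hcd
    calc ∑ i, (a * c) i * d i = ∑ i, a i * (c * d) i := by
          apply Finset.sum_congr rfl; intro i _; simp [Pi.mul_apply]; ring
      _ = 0 := this
end

section
/- For generalized Reed–Solomon codes, the Schur product satisfies GRS_k(a,b) * GRS_{k'}(a,b') = GRS_{k+k'-1}(a, b*b') whenever 1 ≤ k, 1 ≤ k', and k+k'-1 ≤ n. In particular GRS_k(a,b)^(2) = GRS_{2k-1}(a, b^2) when 2k-1 ≤ n. -/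
open Finset

variable {F : Type*} [Field F] {n : ℕ}

/-- Evaluation map for GRS codes. -/
def grsEvalMap (a b : Fin n → F) : Polynomial F →ₗ[F] (Fin n → F) where
  toFun f := fun i => b i * f.eval (a i)
  map_add' f g := by funext i; simp [mul_add]
  map_smul' r f := by funext i; simp [Polynomial.smul_eval]; ring

lemma GRS_eq_map (k : ℕ) (a b : Fin n → F) :
    GRS k a b = Submodule.map (grsEvalMap a b) (Polynomial.degreeLT F k) := by
  unfold GRS
  rw [← Submodule.span_eq (Submodule.map (grsEvalMap a b) (Polynomial.degreeLT F k))]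
  congr 1
  ext x
  simp only [Set.mem_setOf_eq, SetLike.mem_coe, Submodule.mem_map, Polynomial.mem_degreeLT]
  constructor
  · rintro ⟨f, hf, rfl⟩; exact ⟨f, hf, rfl⟩
  · rintro ⟨f, hf, rfl⟩; exact ⟨f, hf, rfl⟩

lemma mem_GRS_iff {k : ℕ} {a b x : Fin n → F} :
    x ∈ GRS k a b ↔ ∃ f : Polynomial F, f.degree < (k : WithBot ℕ) ∧
      x = fun i => b i * f.eval (a i) := by
  rw [GRS_eq_map]
  simp only [Submodule.mem_map, Polynomial.mem_degreeLT]
  constructor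
  · rintro ⟨f, hf, rfl⟩; exact ⟨f, hf, rfl⟩
  · rintro ⟨f, hf, rfl⟩; exact ⟨f, hf, rfl⟩

lemma monomial_mem_GRS {k j : ℕ} (hj : j < k) (a b : Fin n → F) :
    (fun i => b i * a i ^ j) ∈ GRS k a b := by
  apply Submodule.subset_span
  refine ⟨Polynomial.X ^ j, ?_, by simp⟩
  rw [Polynomial.degree_X_pow]
  exact_mod_cast hj

lemma schurMul_GRS_eq (a b b' : Fin n → F) (k k' : ℕ) (hk : 1 ≤ k) (hk' : 1 ≤ k') :
    schurMul (GRS k a b) (GRS k' a b') = GRS (k + k' - 1) a (b * b') := by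
  apply le_antisymm
  · rw [schurMul]
    apply Submodule.span_le.2
    rintro x ⟨u, hu, v, hv, rfl⟩
    rw [mem_GRS_iff] at hu hv
    obtain ⟨f, hf, rfl⟩ := hu
    obtain ⟨g, hg, rfl⟩ := hv
    rw [SetLike.mem_coe, mem_GRS_iff]
    refine ⟨f * g, ?_, by funext i; simp [Pi.mul_apply]; ring⟩
    rw [Polynomial.degree_mul]
    have h1 : f.degree ≤ ((k - 1 : ℕ) : WithBot ℕ) := by
      rcases eq_or_ne f 0 with rfl | h0
      · simp
      · rw [Polynomial.degree_eq_natDegree h0] at hf ⊢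
        exact_mod_cast Nat.le_pred_of_lt (by exact_mod_cast hf)
    have h2 : g.degree ≤ ((k' - 1 : ℕ) : WithBot ℕ) := by
      rcases eq_or_ne g 0 with rfl | h0
      · simp
      · rw [Polynomial.degree_eq_natDegree h0] at hg ⊢
        exact_mod_cast Nat.le_pred_of_lt (by exact_mod_cast hg)
    calc f.degree + g.degree ≤ ((k - 1 : ℕ) : WithBot ℕ) + ((k' - 1 : ℕ) : WithBot ℕ) :=
          add_le_add h1 h2
      _ = (((k - 1) + (k' - 1) : ℕ) : WithBot ℕ) := by exact_mod_cast rfl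
      _ < ((k + k' - 1 : ℕ) : WithBot ℕ) := by exact_mod_cast (by omega : (k-1)+(k'-1) < k+k'-1)
  · rw [GRS]
    apply Submodule.span_le.2
    rintro x ⟨f, hf, rfl⟩
    rw [SetLike.mem_coe]
    have hnd : f.natDegree < k + k' - 1 := by
      rcases eq_or_ne f 0 with rfl | hf0
      · simp; omega
      · exact (Polynomial.natDegree_lt_iff_degree_lt hf0).mpr hf
    have hx : (fun i => (b * b') i * f.eval (a i)) =
        ∑ j ∈ Finset.range (k + k' - 1), f.coeff j •
          ((fun i => b i * a i ^ (min j (k - 1))) * fun i => b' i * a i ^ (j - min j (k - 1))) := by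
      funext i
      rw [Finset.sum_apply]
      simp only [Pi.smul_apply, Pi.mul_apply, smul_eq_mul]
      rw [Polynomial.eval_eq_sum_range' hnd, Finset.mul_sum]
      apply Finset.sum_congr rfl
      intro j _
      rw [show b i * a i ^ min j (k - 1) * (b' i * a i ^ (j - min j (k - 1)))
          = b i * b' i * (a i ^ min j (k - 1) * a i ^ (j - min j (k - 1))) by ring,
        ← pow_add, Nat.add_sub_cancel' (min_le_left _ _)]
      ring
    rw [hx]
    apply Submodule.sum_mem
    intro j hj
    apply Submodule.smul_mem
    apply Submodule.subset_span
    refine ⟨_, monomial_mem_GRS (k := k) (by omega) a b,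
      _, monomial_mem_GRS (k := k') ?_ a b', rfl⟩
    rw [Finset.mem_range] at hj
    omega

theorem schurMul_GRS (a b b' : Fin n → F) (ha : Function.Injective a)
    (hb : ∀ i, b i ≠ 0) (hb' : ∀ i, b' i ≠ 0) (k k' : ℕ) (hk : 1 ≤ k) (hk' : 1 ≤ k')
    (hkn : k + k' - 1 ≤ n) :
    schurMul (GRS k a b) (GRS k' a b') = GRS (k + k' - 1) a (b * b') ∧
      (2 * k - 1 ≤ n → schurPow (GRS k a b) 2 = GRS (2 * k - 1) a (b * b)) := by
  refine ⟨schurMul_GRS_eq a b b' k k' hk hk', fun _ => ?_⟩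
  show schurMul (GRS k a b) (GRS k a b) = _
  rw [schurMul_GRS_eq a b b k k hk hk, two_mul]
end

section
/- Let a ∈ F_q^n have pairwise distinct entries, b have nonzero entries, and 2 ≤ k with 2k ≤ n. If x ∈ F_q^n satisfies x * GRS_k(a,b) ⊆ GRS_{2k-1}(a, b^2), then x ∈ GRS_k(a, b). -/
open Finset

variable {F : Type*} [Field F] {n : ℕ}

namespace GRSAux

open Polynomial

def grsEval (a b : Fin n → F) : Polynomial F →ₗ[F] (Fin n → F) where
  toFun f := fun i => b i * f.eval (a i)
  map_add' f g := by ext i; simp [mul_add]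
  map_smul' c f := by ext i; simp; ring

lemma GRS_eq_map (k : ℕ) (a b : Fin n → F) :
    GRS k a b = (Polynomial.degreeLT F k).map (grsEval a b) := by
  rw [GRS]
  have : {x | ∃ f : Polynomial F, f.degree < (k : WithBot ℕ) ∧ x = fun i => b i * f.eval (a i)}
      = ↑((Polynomial.degreeLT F k).map (grsEval a b)) := by
    ext x
    simp only [Set.mem_setOf_eq, SetLike.mem_coe, Submodule.mem_map, Polynomial.mem_degreeLT]
    constructor
    · rintro ⟨f, hf, rfl⟩; exact ⟨f, hf, rfl⟩
    · rintro ⟨f, hf, rfl⟩; exact ⟨f, hf, rfl⟩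
  rw [this, Submodule.span_eq]

lemma exists_poly_of_mem {k : ℕ} {a b : Fin n → F} {c : Fin n → F} (hc : c ∈ GRS k a b) :
    ∃ f : Polynomial F, f.degree < (k : WithBot ℕ) ∧ ∀ i, c i = b i * f.eval (a i) := by
  rw [GRS_eq_map] at hc
  obtain ⟨f, hf, rfl⟩ := hc
  exact ⟨f, Polynomial.mem_degreeLT.mp hf, fun i => rfl⟩

lemma mem_of_poly {k : ℕ} {a b : Fin n → F} {f : Polynomial F}
    (hf : f.degree < (k : WithBot ℕ)) :
    (fun i => b i * f.eval (a i)) ∈ GRS k a b :=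
  Submodule.subset_span ⟨f, hf, rfl⟩

lemma natDeg_le_of_deg_lt {q : Polynomial F} {m : ℕ}
    (h : q.degree < ((m + 1 : ℕ) : WithBot ℕ)) : q.natDegree ≤ m := by
  by_cases hq : q = 0
  · simp [hq]
  · have := (Polynomial.natDegree_lt_iff_degree_lt hq).mpr h
    omega

end GRSAux

theorem mem_GRS_of_schur_mul_subset (a b : Fin n → F) (ha : Function.Injective a)
    (hb : ∀ i, b i ≠ 0) (k : ℕ) (hk : 2 ≤ k) (hkn : 2 * k ≤ n) (x : Fin n → F)
    (hx : ∀ c ∈ GRS k a b, x * c ∈ GRS (2 * k - 1) a (b * b)) :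
    x ∈ GRS k a b := by
  classical
  open Polynomial GRSAux in
  -- Step 1: from f = 1, get x i = b i * p (a i) with deg p < 2k-1
  have h1 : (fun i => b i * (1 : Polynomial F).eval (a i)) ∈ GRS k a b := by
    refine mem_of_poly ?_
    rw [Polynomial.degree_one]
    exact_mod_cast show (0 : ℕ) < k by omega
  obtain ⟨p, hpdeg, hpev⟩ := exists_poly_of_mem (hx _ h1)
  have hxi : ∀ i, x i = b i * p.eval (a i) := by
    intro i
    have h := hpev i
    simp only [Pi.mul_apply, Polynomial.eval_one, mul_one] at h
    have hbi := hb i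
    -- h : x i * b i = b i * (b i * p.eval (a i)) or similar
    have : x i * b i = (b i * p.eval (a i)) * b i := by linear_combination h
    exact mul_right_cancel₀ hbi this
  -- Step 2: induction showing deg p < 2k-1-j for j ≤ k-1
  have claim : ∀ j, j ≤ k - 1 → p.degree < ((2 * k - 1 - j : ℕ) : WithBot ℕ) := by
    intro j
    induction j with
    | zero =>
      intro _
      have : 2 * k - 1 - 0 = 2 * k - 1 := rfl
      rw [this]
      exact hpdeg
    | succ j ih =>
      intro hj
      have hpd := ih (by omega)
      by_cases hp0 : p = 0
      · simp [hp0]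
      have hjk : j + 1 < k := by omega
      have hc : (fun i => b i * (X ^ (j + 1) : Polynomial F).eval (a i)) ∈ GRS k a b := by
        refine mem_of_poly ?_
        rw [Polynomial.degree_X_pow]
        exact_mod_cast hjk
      obtain ⟨h, hhdeg, hhev⟩ := exists_poly_of_mem (hx _ hc)
      have hroots : ∀ i, ((X : Polynomial F) ^ (j + 1) * p - h).eval (a i) = 0 := by
        intro i
        have he := hhev i
        simp only [Pi.mul_apply, Polynomial.eval_pow, Polynomial.eval_X] at he
        rw [hxi i] at he
        have hbi := hb i
        simp only [Polynomial.eval_sub, Polynomial.eval_mul, Polynomial.eval_pow,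
          Polynomial.eval_X]
        have hcc : b i * b i * (a i ^ (j + 1) * p.eval (a i)) =
            b i * b i * h.eval (a i) := by linear_combination he
        have := mul_left_cancel₀ (mul_ne_zero hbi hbi) hcc
        linear_combination this
      -- degree bounds
      have hpnat : p.natDegree ≤ 2 * k - 2 - j := by
        have := (Polynomial.natDegree_lt_iff_degree_lt hp0).mpr hpd
        omega
      have hhnat : h.natDegree ≤ 2 * k - 2 := by
        have : h.degree < ((2 * k - 2 + 1 : ℕ) : WithBot ℕ) := by
          convert hhdeg using 2; omega
        exact natDeg_le_of_deg_lt this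
      have hqnat : ((X : Polynomial F) ^ (j + 1) * p - h).natDegree < Fintype.card (Fin n) := by
        have h1' : ((X : Polynomial F) ^ (j + 1) * p).natDegree ≤ (j + 1) + p.natDegree := by
          refine le_trans (Polynomial.natDegree_mul_le) ?_
          simp [Polynomial.natDegree_X_pow]
        have h2' := Polynomial.natDegree_sub_le ((X : Polynomial F) ^ (j + 1) * p) h
        simp only [Fintype.card_fin]
        omega
      have hq0 : (X : Polynomial F) ^ (j + 1) * p - h = 0 :=
        Polynomial.eq_zero_of_natDegree_lt_card_of_eval_eq_zero _ ha hroots hqnat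
      have heq : (X : Polynomial F) ^ (j + 1) * p = h := by
        linear_combination hq0
      have hdegh : h.degree = ((j + 1) + p.natDegree : ℕ) := by
        rw [← heq, Polynomial.degree_mul, Polynomial.degree_X_pow,
          Polynomial.degree_eq_natDegree hp0]
        push_cast
        ring
      rw [hdegh] at hhdeg
      have hlt : (j + 1) + p.natDegree < 2 * k - 1 := by exact_mod_cast hhdeg
      rw [Polynomial.degree_eq_natDegree hp0]
      exact_mod_cast show p.natDegree < 2 * k - 1 - (j + 1) by omega
  have hfin := claim (k - 1) le_rfl
  have : p.degree < (k : WithBot ℕ) := by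
    convert hfin using 2
    omega
  have hxeq : x = fun i => b i * p.eval (a i) := funext hxi
  rw [hxeq]
  exact mem_of_poly this
end
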